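/- Let A be a real M×N matrix such that AA* is invertible, with δ_k(A) < 1. Suppose y = Ax + e where x ∈ ℝ^N is s-sparse and e ∈ ℝ^M, with k ≥ s, and let λ > 0. Let μ^{k−1} ∈ ℝ^N be (k−1)-sparse, set x^k = μ^{k−1} + A*(AA*)⁻¹(y − Aμ^{k−1}), let T_k be an index set of k largest absolute entries of x^k, and let μ^k be the vector supported on T_k defined by μ^k = (x^k)_{T_k} + λ⁻¹·[A*(y − A(x^k)_{T_k})]_{T_k}. Then ‖x − μ^k‖₂ ≤ 2√2·γ_{2k+s−1}(A)·(1 + (1+δ_k(A))√(1+δ_{s+k}(A))/(λ√(1−δ_k(A)))) · ‖x − μ^{k−1}‖₂ + [(1 + (1+δ_k(A))√(1+δ_{s+k}(A))/(λ√(1−δ_k(A))))·(√(2+2θ_{k+s}(A)) + √(1+θ_k(A))) + (1+δ_k(A))/(λ√(1−δ_k(A)))] · ‖e‖₂. -/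

import Mathlib

open Matrix

/-- The Euclidean (ℓ²) norm of a vector in ℝⁿ. -/
noncomputable def norm2 {n : ℕ} (x : Fin n → ℝ) : ℝ := Real.sqrt (∑ i, x i ^ 2)

/-- `x` is `s`-sparse: it has at most `s` nonzero entries. -/
def sparse {n : ℕ} (s : ℕ) (x : Fin n → ℝ) : Prop :=
  (Finset.univ.filter fun i => x i ≠ 0).card ≤ s

/-- `restrict T x` is the vector agreeing with `x` on `T` and zero outside `T`. -/
def restrict {n : ℕ} (T : Finset (Fin n)) (x : Fin n → ℝ) : Fin n → ℝ :=
  fun i => if i ∈ T then x i else 0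

/-- The preconditioned matrix `(AAᴴ)^{-1/2} A`, where `(AAᴴ)^{-1/2}` is the inverse of the
positive semidefinite square root of `AAᴴ`. -/
noncomputable def precond {M N : ℕ} (A : Matrix (Fin M) (Fin N) ℝ) :
    Matrix (Fin M) (Fin N) ℝ :=
  ((Matrix.posSemidef_self_mul_conjTranspose A).isHermitian.eigenvectorUnitary.1 *
      Matrix.diagonal ((↑) ∘ (√·) ∘ (Matrix.posSemidef_self_mul_conjTranspose A).isHermitian.eigenvalues) *
      (star (Matrix.posSemidef_self_mul_conjTranspose A).isHermitian.eigenvectorUnitary :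
        Matrix (Fin M) (Fin M) ℝ))⁻¹ * A

/-- The preconditioned restricted isometry constant `γ_s(A)`: the smallest `γ ≥ 0` such that
`(1-γ)‖x‖₂² ≤ ‖(AAᴴ)^{-1/2}Ax‖₂²` for all `s`-sparse `x`. -/
noncomputable def pripConst {M N : ℕ} (A : Matrix (Fin M) (Fin N) ℝ) (s : ℕ) : ℝ :=
  sInf {γ : ℝ | 0 ≤ γ ∧ ∀ x : Fin N → ℝ, sparse s x →
    (1 - γ) * norm2 x ^ 2 ≤ norm2 ((precond A).mulVec x) ^ 2}

/-- The restricted isometry constant `δ_s(B)`: the smallest `δ ≥ 0` such that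
`(1-δ)‖x‖₂² ≤ ‖Bx‖₂² ≤ (1+δ)‖x‖₂²` for all `s`-sparse `x`. -/
noncomputable def ripConst {m n : ℕ} (B : Matrix (Fin m) (Fin n) ℝ) (s : ℕ) : ℝ :=
  sInf {δ : ℝ | 0 ≤ δ ∧ ∀ x : Fin n → ℝ, sparse s x →
    (1 - δ) * norm2 x ^ 2 ≤ norm2 (B.mulVec x) ^ 2 ∧
      norm2 (B.mulVec x) ^ 2 ≤ (1 + δ) * norm2 x ^ 2}

/-- `θ_t(A) = δ_t((AAᴴ)⁻¹A)`. -/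
noncomputable def thetaConst {M N : ℕ} (A : Matrix (Fin M) (Fin N) ℝ) (t : ℕ) : ℝ :=
  ripConst ((A * Aᴴ)⁻¹ * A) t

/-!
Write `P = Aᴴ(AAᴴ)⁻¹A` for the orthogonal projection onto the row space of `A` and
`v = x - μ^{k-1}`; the update gives `x - x^k = (1 - P) v - Aᴴ(AAᴴ)⁻¹ e`. The Gram matrix of
`(AAᴴ)^{-1/2} A` is `P`, so `‖(1 - P) z‖² ≤ γ_t ‖z‖²` for `t`-sparse `z`. Because `1 - P` is itself
an orthogonal projection, `⟪(1 - P) v, g⟫ = ⟪(1 - P) v, (1 - P) g⟫`, which upgrades this to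
`‖((1 - P) v)_U‖ ≤ γ_t ‖v‖` whenever `|U| ≤ t`; the noise part on `U` is controlled by `θ_{|U|}`.
Hard thresholding costs a factor `1 + √2 ≤ 2√2`, applied on `T_k` and on `S Δ T_k` (`S` the
support of `x`), and the feedback term `λ⁻¹ (Aᴴ(A u + e))_{T_k}` is bounded by upper RIP bounds.
-/

section Norm2

variable {n : ℕ}

lemma norm2_eq_norm (x : Fin n → ℝ) : norm2 x = ‖WithLp.toLp 2 x‖ := by
  rw [EuclideanSpace.norm_eq, norm2]
  simp

lemma norm2_nonneg (x : Fin n → ℝ) : 0 ≤ norm2 x := Real.sqrt_nonneg _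

lemma norm2_sq_eq_dotProduct (x : Fin n → ℝ) : norm2 x ^ 2 = x ⬝ᵥ x := by
  rw [norm2, Real.sq_sqrt (Finset.sum_nonneg fun i _ => sq_nonneg (x i))]
  simp [dotProduct, sq]

lemma dotProduct_le_norm2_mul_norm2 (x y : Fin n → ℝ) : x ⬝ᵥ y ≤ norm2 x * norm2 y := by
  simpa [dotProduct, norm2] using Real.sum_mul_le_sqrt_mul_sqrt Finset.univ x y

lemma norm2_add_le (x y : Fin n → ℝ) : norm2 (x + y) ≤ norm2 x + norm2 y := by
  simpa only [norm2_eq_norm, WithLp.toLp_add] using norm_add_le _ _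

lemma norm2_sub_le (x y : Fin n → ℝ) : norm2 (x - y) ≤ norm2 x + norm2 y := by
  simpa only [norm2_eq_norm, WithLp.toLp_sub] using norm_sub_le _ _

lemma norm2_smul (c : ℝ) (x : Fin n → ℝ) : norm2 (c • x) = |c| * norm2 x := by
  simp only [norm2_eq_norm, WithLp.toLp_smul, norm_smul, Real.norm_eq_abs]

lemma le_of_sq_le_mul {a c : ℝ} (hc : 0 ≤ c) (h : a ^ 2 ≤ c * a) : a ≤ c := by
  by_contra! hca
  nlinarith

end Norm2

section Restrict

variable {n : ℕ}

lemma restrict_add (T : Finset (Fin n)) (p q : Fin n → ℝ) :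
    restrict T (p + q) = restrict T p + restrict T q := by
  ext i
  simp only [restrict, Pi.add_apply]
  split_ifs <;> simp

lemma restrict_sub (T : Finset (Fin n)) (p q : Fin n → ℝ) :
    restrict T (p - q) = restrict T p - restrict T q := by
  ext i
  simp only [restrict, Pi.sub_apply]
  split_ifs <;> simp

lemma sparse_of_support_subset {s : ℕ} {x : Fin n → ℝ} {U : Finset (Fin n)}
    (h : ∀ i, x i ≠ 0 → i ∈ U) (hU : U.card ≤ s) : sparse s x :=
  (Finset.card_le_card fun i hi => h i (Finset.mem_filter.1 hi).2).trans hU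

lemma sparse_sub {s t : ℕ} {x y : Fin n → ℝ} (hx : sparse s x) (hy : sparse t y) :
    sparse (s + t) (x - y) := by
  refine sparse_of_support_subset (U := (Finset.univ.filter fun i => x i ≠ 0) ∪
    Finset.univ.filter fun i => y i ≠ 0) (fun i hi => ?_)
    ((Finset.card_union_le _ _).trans (add_le_add hx hy))
  by_contra hi'
  simp_all

lemma sparse_restrict {s : ℕ} {T : Finset (Fin n)} (hT : T.card ≤ s) (x : Fin n → ℝ) :
    sparse s (restrict T x) :=
  sparse_of_support_subset (fun i hi => by by_contra hiT; simp [restrict, hiT] at hi) hT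

lemma norm2_restrict_sq (T : Finset (Fin n)) (z : Fin n → ℝ) :
    norm2 (restrict T z) ^ 2 = ∑ i ∈ T, z i ^ 2 := by
  rw [norm2, Real.sq_sqrt (Finset.sum_nonneg fun i _ => sq_nonneg _)]
  simp [restrict, ite_pow, Finset.sum_ite_mem]

lemma dotProduct_restrict_self (T : Finset (Fin n)) (z : Fin n → ℝ) :
    z ⬝ᵥ restrict T z = norm2 (restrict T z) ^ 2 := by
  rw [norm2_sq_eq_dotProduct]
  refine Finset.sum_congr rfl fun i _ => ?_
  by_cases hi : i ∈ T <;> simp [restrict, hi]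

lemma norm2_restrict_le_of_dotProduct_le {T : Finset (Fin n)} {z : Fin n → ℝ} {c : ℝ}
    (hc : 0 ≤ c) (h : z ⬝ᵥ restrict T z ≤ c * norm2 (restrict T z)) :
    norm2 (restrict T z) ≤ c :=
  le_of_sq_le_mul hc (by rwa [← dotProduct_restrict_self])

lemma norm2_restrict_add_norm2_restrict_le {U V : Finset (Fin n)} (hUV : Disjoint U V)
    (z : Fin n → ℝ) :
    norm2 (restrict U z) + norm2 (restrict V z) ≤ √2 * norm2 (restrict (U ∪ V) z) := by
  have hsq : norm2 (restrict (U ∪ V) z) ^ 2 =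
      norm2 (restrict U z) ^ 2 + norm2 (restrict V z) ^ 2 := by
    simp only [norm2_restrict_sq, Finset.sum_union hUV]
  rw [← Real.sqrt_sq (norm2_nonneg (restrict (U ∪ V) z)), ← Real.sqrt_mul zero_le_two, hsq]
  apply Real.le_sqrt_of_sq_le
  nlinarith [sq_nonneg (norm2 (restrict U z) - norm2 (restrict V z))]

lemma sum_sq_sdiff_le_of_isTop {S T : Finset (Fin n)} {z : Fin n → ℝ} (hST : S.card ≤ T.card)
    (hT : ∀ i ∈ T, ∀ j ∉ T, |z j| ≤ |z i|) :
    ∑ j ∈ S \ T, z j ^ 2 ≤ ∑ i ∈ T \ S, z i ^ 2 := by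
  have hcard := Finset.card_sdiff_le_card_sdiff_iff.2 hST
  rcases (T \ S).eq_empty_or_nonempty with hTS | hTS
  · have hST' : S \ T = ∅ := Finset.card_eq_zero.1 (by simpa [hTS] using hcard)
    simp [hST', hTS]
  obtain ⟨i₀, hi₀, hmin⟩ := Finset.exists_min_image (T \ S) (fun i => z i ^ 2) hTS
  calc ∑ j ∈ S \ T, z j ^ 2 ≤ (S \ T).card • z i₀ ^ 2 :=
        Finset.sum_le_card_nsmul _ _ _ fun j hj =>
          sq_le_sq.2 (hT i₀ (Finset.mem_sdiff.1 hi₀).1 j (Finset.mem_sdiff.1 hj).2)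
    _ ≤ (T \ S).card • z i₀ ^ 2 := nsmul_le_nsmul_left (sq_nonneg _) hcard
    _ ≤ ∑ i ∈ T \ S, z i ^ 2 := Finset.card_nsmul_le_sum _ _ _ hmin

lemma norm2_sub_restrict_le_of_isTop {S T : Finset (Fin n)} {x z : Fin n → ℝ}
    (hxS : ∀ i ∉ S, x i = 0) (hST : S.card ≤ T.card)
    (hT : ∀ i ∈ T, ∀ j ∉ T, |z j| ≤ |z i|) :
    norm2 (x - restrict T z) ≤
      norm2 (restrict T (x - z)) + √2 * norm2 (restrict (S \ T ∪ T \ S) (x - z)) := by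
  have hsplit : x - restrict T z =
      restrict T (x - z) + (restrict (S \ T) (x - z) + restrict (S \ T) z) := by
    ext i
    by_cases hiT : i ∈ T
    · simp [restrict, hiT]
    · by_cases hiS : i ∈ S
      · simp [restrict, hiT, hiS]
      · simp [restrict, hiT, hiS, hxS i hiS]
  have hz : norm2 (restrict (S \ T) z) ≤ norm2 (restrict (T \ S) (x - z)) := by
    refine (pow_le_pow_iff_left₀ (norm2_nonneg _) (norm2_nonneg _) two_ne_zero).1 ?_
    rw [norm2_restrict_sq, norm2_restrict_sq]
    refine (sum_sq_sdiff_le_of_isTop hST hT).trans_eq (Finset.sum_congr rfl fun i hi => ?_)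
    simp [hxS i (Finset.mem_sdiff.1 hi).2]
  calc norm2 (x - restrict T z)
      ≤ norm2 (restrict T (x - z)) +
          (norm2 (restrict (S \ T) (x - z)) + norm2 (restrict (S \ T) z)) := by
        rw [hsplit]
        exact (norm2_add_le _ _).trans (by gcongr; exact norm2_add_le _ _)
    _ ≤ norm2 (restrict T (x - z)) +
          (norm2 (restrict (S \ T) (x - z)) + norm2 (restrict (T \ S) (x - z))) := by
        gcongr
    _ ≤ _ := by
        gcongr
        exact norm2_restrict_add_norm2_restrict_le disjoint_sdiff_sdiff _

end Restrict

section RIP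

variable {m n : ℕ}

lemma le_csInf_mul {S : Set ℝ} (hS : S.Nonempty) {a c : ℝ} (hc : 0 ≤ c)
    (h : ∀ δ ∈ S, a ≤ δ * c) : a ≤ sInf S * c := by
  rcases hc.eq_or_lt with rfl | hc
  · obtain ⟨δ, hδ⟩ := hS
    simpa using h δ hδ
  · exact (div_le_iff₀ hc).1 (le_csInf hS fun δ hδ => (div_le_iff₀ hc).2 (h δ hδ))

lemma norm2_mulVec_sq_le_frobenius (B : Matrix (Fin m) (Fin n) ℝ) (x : Fin n → ℝ) :
    norm2 (B *ᵥ x) ^ 2 ≤ (∑ i, ∑ j, B i j ^ 2) * norm2 x ^ 2 := by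
  rw [norm2_sq_eq_dotProduct, norm2_sq_eq_dotProduct, Finset.sum_mul]
  refine Finset.sum_le_sum fun i _ => ?_
  simpa [mulVec, dotProduct, sq] using
    Finset.sum_mul_sq_le_sq_mul_sq Finset.univ (fun j => B i j) x

lemma ripConst_set_nonempty (B : Matrix (Fin m) (Fin n) ℝ) (s : ℕ) :
    {δ : ℝ | 0 ≤ δ ∧ ∀ x : Fin n → ℝ, sparse s x →
      (1 - δ) * norm2 x ^ 2 ≤ norm2 (B *ᵥ x) ^ 2 ∧
        norm2 (B *ᵥ x) ^ 2 ≤ (1 + δ) * norm2 x ^ 2}.Nonempty := by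
  have hF : 0 ≤ ∑ i, ∑ j, B i j ^ 2 := by positivity
  refine ⟨1 + ∑ i, ∑ j, B i j ^ 2, by positivity, fun x _ => ⟨?_, ?_⟩⟩
  · nlinarith [sq_nonneg (norm2 x), sq_nonneg (norm2 (B *ᵥ x))]
  · nlinarith [norm2_mulVec_sq_le_frobenius B x, sq_nonneg (norm2 x)]

lemma ripConst_nonneg (B : Matrix (Fin m) (Fin n) ℝ) (s : ℕ) : 0 ≤ ripConst B s :=
  le_csInf (ripConst_set_nonempty B s) fun _ hδ => hδ.1

lemma norm2_mulVec_sq_le_of_sparse (B : Matrix (Fin m) (Fin n) ℝ) {s : ℕ} {x : Fin n → ℝ}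
    (hx : sparse s x) : norm2 (B *ᵥ x) ^ 2 ≤ (1 + ripConst B s) * norm2 x ^ 2 := by
  have := le_csInf_mul (ripConst_set_nonempty B s) (sq_nonneg (norm2 x))
    (a := norm2 (B *ᵥ x) ^ 2 - norm2 x ^ 2) fun δ hδ => by linarith [(hδ.2 x hx).2]
  rw [ripConst]
  linarith

lemma norm2_mulVec_le_of_sparse (B : Matrix (Fin m) (Fin n) ℝ) {s : ℕ} {x : Fin n → ℝ}
    (hx : sparse s x) : norm2 (B *ᵥ x) ≤ √(1 + ripConst B s) * norm2 x := by
  rw [← Real.sqrt_sq (norm2_nonneg (B *ᵥ x)), ← Real.sqrt_sq (norm2_nonneg x),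
    ← Real.sqrt_mul (by linarith [ripConst_nonneg B s])]
  exact Real.sqrt_le_sqrt (norm2_mulVec_sq_le_of_sparse B hx)

lemma conjTranspose_mulVec_dotProduct (B : Matrix (Fin m) (Fin n) ℝ) (u : Fin m → ℝ)
    (v : Fin n → ℝ) : (Bᴴ *ᵥ u) ⬝ᵥ v = u ⬝ᵥ (B *ᵥ v) := by
  rw [conjTranspose_eq_transpose_of_trivial, mulVec_transpose, dotProduct_mulVec]

lemma norm2_restrict_conjTranspose_mulVec_le (B : Matrix (Fin m) (Fin n) ℝ) {s : ℕ}
    {T : Finset (Fin n)} (hT : T.card ≤ s) (e : Fin m → ℝ) :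
    norm2 (restrict T (Bᴴ *ᵥ e)) ≤ √(1 + ripConst B s) * norm2 e := by
  refine norm2_restrict_le_of_dotProduct_le (mul_nonneg (Real.sqrt_nonneg _) (norm2_nonneg e)) ?_
  calc (Bᴴ *ᵥ e) ⬝ᵥ restrict T (Bᴴ *ᵥ e) = e ⬝ᵥ (B *ᵥ restrict T (Bᴴ *ᵥ e)) :=
        conjTranspose_mulVec_dotProduct B e _
    _ ≤ norm2 e * (√(1 + ripConst B s) * norm2 (restrict T (Bᴴ *ᵥ e))) :=
        (dotProduct_le_norm2_mul_norm2 _ _).trans <| by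
          gcongr
          · exact norm2_nonneg e
          · exact norm2_mulVec_le_of_sparse B (sparse_restrict hT _)
    _ = √(1 + ripConst B s) * norm2 e * norm2 (restrict T (Bᴴ *ᵥ e)) := by ring

end RIP

section Projection

variable {M N : ℕ} (A : Matrix (Fin M) (Fin N) ℝ)

noncomputable def rowSpaceProj : Matrix (Fin N) (Fin N) ℝ := Aᴴ * (A * Aᴴ)⁻¹ * A

lemma conjTranspose_self_mul_conjTranspose_inv : ((A * Aᴴ)⁻¹)ᴴ = (A * Aᴴ)⁻¹ := by
  rw [conjTranspose_nonsing_inv, conjTranspose_mul, conjTranspose_conjTranspose]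

lemma rowSpaceProj_conjTranspose : (rowSpaceProj A)ᴴ = rowSpaceProj A := by
  rw [rowSpaceProj, conjTranspose_mul, conjTranspose_mul, conjTranspose_conjTranspose,
    conjTranspose_self_mul_conjTranspose_inv, Matrix.mul_assoc]

lemma isIdempotentElem_rowSpaceProj (hA : IsUnit (A * Aᴴ).det) :
    IsIdempotentElem (rowSpaceProj A) := by
  calc rowSpaceProj A * rowSpaceProj A = Aᴴ * ((A * Aᴴ)⁻¹ * (A * Aᴴ)) * ((A * Aᴴ)⁻¹ * A) := by
        simp only [rowSpaceProj, Matrix.mul_assoc]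
    _ = rowSpaceProj A := by
        rw [nonsing_inv_mul _ hA, Matrix.mul_one, rowSpaceProj, Matrix.mul_assoc]

lemma one_sub_rowSpaceProj_conjTranspose : (1 - rowSpaceProj A)ᴴ = 1 - rowSpaceProj A := by
  rw [conjTranspose_sub, conjTranspose_one, rowSpaceProj_conjTranspose]

lemma cfc_sqrt_mul_self {m : ℕ} {G : Matrix (Fin m) (Fin m) ℝ} (hG : G.PosSemidef) :
    cfc Real.sqrt G * cfc Real.sqrt G = G := by
  rw [← cfc_mul Real.sqrt Real.sqrt G]
  conv_rhs => rw [← cfc_id' ℝ G (ha := hG.isHermitian)]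
  refine cfc_congr fun t ht => Real.mul_self_sqrt ?_
  rw [hG.isHermitian.spectrum_real_eq_range_eigenvalues] at ht
  obtain ⟨i, rfl⟩ := ht
  exact hG.eigenvalues_nonneg i

lemma precond_eq_cfc_sqrt : precond A = (cfc Real.sqrt (A * Aᴴ))⁻¹ * A := by
  rw [(posSemidef_self_mul_conjTranspose A).isHermitian.cfc_eq]
  rfl

lemma conjTranspose_precond_mul_precond : (precond A)ᴴ * precond A = rowSpaceProj A := by
  have hS : (cfc Real.sqrt (A * Aᴴ))ᴴ = cfc Real.sqrt (A * Aᴴ) :=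
    (cfc_predicate Real.sqrt (A * Aᴴ) : IsSelfAdjoint _)
  rw [precond_eq_cfc_sqrt, conjTranspose_mul, conjTranspose_nonsing_inv, hS, Matrix.mul_assoc,
    ← Matrix.mul_assoc _ _ A, ← Matrix.mul_inv_rev,
    cfc_sqrt_mul_self (posSemidef_self_mul_conjTranspose A),
    rowSpaceProj, Matrix.mul_assoc]

lemma mulVec_dotProduct_eq_of_isIdempotent {n : ℕ} {Q : Matrix (Fin n) (Fin n) ℝ}
    (hQ : Qᴴ = Q) (hQQ : IsIdempotentElem Q) (a b : Fin n → ℝ) :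
    (Q *ᵥ a) ⬝ᵥ b = (Q *ᵥ a) ⬝ᵥ (Q *ᵥ b) := by
  rw [← conjTranspose_mulVec_dotProduct, hQ, mulVec_mulVec, hQQ.eq]

lemma pripConst_set_nonempty (s : ℕ) :
    {γ : ℝ | 0 ≤ γ ∧ ∀ x : Fin N → ℝ, sparse s x →
      (1 - γ) * norm2 x ^ 2 ≤ norm2 (precond A *ᵥ x) ^ 2}.Nonempty :=
  ⟨1, zero_le_one, fun x _ => by simpa using sq_nonneg (norm2 (precond A *ᵥ x))⟩

lemma pripConst_nonneg (s : ℕ) : 0 ≤ pripConst A s :=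
  le_csInf (pripConst_set_nonempty A s) fun _ hγ => hγ.1

lemma sq_norm2_mulVec_precond_ge {s : ℕ} {x : Fin N → ℝ} (hx : sparse s x) :
    (1 - pripConst A s) * norm2 x ^ 2 ≤ norm2 (precond A *ᵥ x) ^ 2 := by
  have := le_csInf_mul (pripConst_set_nonempty A s) (sq_nonneg (norm2 x))
    (a := norm2 x ^ 2 - norm2 (precond A *ᵥ x) ^ 2) fun γ hγ => by linarith [hγ.2 x hx]
  rw [pripConst]
  linarith

variable {A}

lemma norm2_sub_rowSpaceProj_sq_le (hA : IsUnit (A * Aᴴ).det) {t : ℕ} {z : Fin N → ℝ}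
    (hz : sparse t z) :
    norm2 ((1 - rowSpaceProj A) *ᵥ z) ^ 2 ≤ pripConst A t * norm2 z ^ 2 := by
  have hprecond : norm2 (precond A *ᵥ z) ^ 2 = (rowSpaceProj A *ᵥ z) ⬝ᵥ z := by
    rw [norm2_sq_eq_dotProduct, ← conjTranspose_mulVec_dotProduct, mulVec_mulVec,
      conjTranspose_precond_mul_precond, dotProduct_comm]
  have hres : norm2 ((1 - rowSpaceProj A) *ᵥ z) ^ 2 =
      norm2 z ^ 2 - norm2 (precond A *ᵥ z) ^ 2 := by
    rw [norm2_sq_eq_dotProduct, ← mulVec_dotProduct_eq_of_isIdempotent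
      (one_sub_rowSpaceProj_conjTranspose A) (isIdempotentElem_rowSpaceProj A hA).one_sub, hprecond,
      norm2_sq_eq_dotProduct, sub_mulVec, one_mulVec, sub_dotProduct]
  rw [hres]
  linarith [sq_norm2_mulVec_precond_ge A hz]

lemma norm2_restrict_sub_rowSpaceProj_le (hA : IsUnit (A * Aᴴ).det) {t : ℕ} {v : Fin N → ℝ}
    (hv : sparse t v) {U : Finset (Fin N)} (hU : U.card ≤ t) :
    norm2 (restrict U ((1 - rowSpaceProj A) *ᵥ v)) ≤ pripConst A t * norm2 v := by
  set Q := 1 - rowSpaceProj A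
  set g := restrict U (Q *ᵥ v)
  have hγ := pripConst_nonneg A t
  have hQ : ∀ z, sparse t z → norm2 (Q *ᵥ z) ≤ √(pripConst A t) * norm2 z := by
    intro z hz
    rw [← Real.sqrt_sq (norm2_nonneg (Q *ᵥ z)), ← Real.sqrt_sq (norm2_nonneg z),
      ← Real.sqrt_mul hγ]
    exact Real.sqrt_le_sqrt (norm2_sub_rowSpaceProj_sq_le hA hz)
  refine norm2_restrict_le_of_dotProduct_le (mul_nonneg hγ (norm2_nonneg v)) ?_
  calc (Q *ᵥ v) ⬝ᵥ g = (Q *ᵥ v) ⬝ᵥ (Q *ᵥ g) := mulVec_dotProduct_eq_of_isIdempotent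
        (one_sub_rowSpaceProj_conjTranspose A) (isIdempotentElem_rowSpaceProj A hA).one_sub _ _
    _ ≤ norm2 (Q *ᵥ v) * norm2 (Q *ᵥ g) := dotProduct_le_norm2_mul_norm2 _ _
    _ ≤ (√(pripConst A t) * norm2 v) * (√(pripConst A t) * norm2 g) :=
        mul_le_mul (hQ v hv) (hQ g (sparse_restrict hU _)) (norm2_nonneg _)
          (mul_nonneg (Real.sqrt_nonneg _) (norm2_nonneg v))
    _ = pripConst A t * norm2 v * norm2 g := by
        rw [mul_mul_mul_comm, Real.mul_self_sqrt hγ, mul_assoc]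

end Projection

section Iteration

variable {M N : ℕ} (A : Matrix (Fin M) (Fin N) ℝ)

lemma sub_pinv_step (x μ : Fin N → ℝ) (e : Fin M → ℝ) :
    x - (μ + (Aᴴ * (A * Aᴴ)⁻¹) *ᵥ (A *ᵥ x + e - A *ᵥ μ)) =
      (1 - rowSpaceProj A) *ᵥ (x - μ) - (Aᴴ * (A * Aᴴ)⁻¹) *ᵥ e := by
  simp only [rowSpaceProj, sub_mulVec, one_mulVec, mulVec_sub, mulVec_add, mulVec_mulVec]
  abel

lemma norm2_restrict_pinv_mulVec_le {t : ℕ} {U : Finset (Fin N)} (hU : U.card ≤ t)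
    (e : Fin M → ℝ) :
    norm2 (restrict U ((Aᴴ * (A * Aᴴ)⁻¹) *ᵥ e)) ≤ √(1 + thetaConst A t) * norm2 e := by
  rw [← conjTranspose_self_mul_conjTranspose_inv, ← conjTranspose_mul]
  exact norm2_restrict_conjTranspose_mulVec_le _ hU e

lemma norm2_sub_hardThreshold_le (hA : IsUnit (A * Aᴴ).det) {s k : ℕ} (hks : s ≤ k)
    {x μ xk : Fin N → ℝ} (hx : sparse s x) (hμ : sparse (k - 1) μ) (e : Fin M → ℝ)
    (hxk : xk = μ + (Aᴴ * (A * Aᴴ)⁻¹) *ᵥ (A *ᵥ x + e - A *ᵥ μ))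
    {T : Finset (Fin N)} (hTcard : T.card = k) (hT : ∀ i ∈ T, ∀ j ∉ T, |xk j| ≤ |xk i|) :
    norm2 (x - restrict T xk) ≤ 2 * √2 * pripConst A (2 * k + s - 1) * norm2 (x - μ) +
      (√(2 + 2 * thetaConst A (k + s)) + √(1 + thetaConst A k)) * norm2 e := by
  set S := Finset.univ.filter fun i => x i ≠ 0
  have hxS : ∀ i ∉ S, x i = 0 := fun i hi => by simpa [S] using hi
  have hScard : S.card ≤ s := hx
  have hv : sparse (2 * k + s - 1) (x - μ) := (sparse_sub hx hμ).trans (by omega)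
  have hbound : ∀ (U : Finset (Fin N)) (t : ℕ), U.card ≤ 2 * k + s - 1 → U.card ≤ t →
      norm2 (restrict U (x - xk)) ≤
        pripConst A (2 * k + s - 1) * norm2 (x - μ) + √(1 + thetaConst A t) * norm2 e := by
    intro U t hU hUt
    rw [hxk, sub_pinv_step, restrict_sub]
    exact (norm2_sub_le _ _).trans (add_le_add (norm2_restrict_sub_rowSpaceProj_le hA hv hU)
      (norm2_restrict_pinv_mulVec_le A hUt e))
  have hΔcard : (S \ T ∪ T \ S).card ≤ s + k := by
    have := Finset.card_union_le (S \ T) (T \ S)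
    have := Finset.card_le_card (Finset.sdiff_subset (s := S) (t := T))
    have := Finset.card_le_card (Finset.sdiff_subset (s := T) (t := S))
    omega
  have hT' := hbound T k (by omega) hTcard.le
  have hΔ := hbound (S \ T ∪ T \ S) (k + s) (by omega) (by omega)
  have hγ : 0 ≤ pripConst A (2 * k + s - 1) * norm2 (x - μ) :=
    mul_nonneg (pripConst_nonneg A _) (norm2_nonneg _)
  have hsqrt2 : 1 + √2 ≤ 2 * √2 := by nlinarith [Real.one_lt_sqrt_two]
  have hθ : √(2 + 2 * thetaConst A (k + s)) = √2 * √(1 + thetaConst A (k + s)) := by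
    rw [← Real.sqrt_mul zero_le_two]
    ring_nf
  calc norm2 (x - restrict T xk)
      ≤ norm2 (restrict T (x - xk)) + √2 * norm2 (restrict (S \ T ∪ T \ S) (x - xk)) :=
        norm2_sub_restrict_le_of_isTop hxS (by omega) hT
    _ ≤ _ := by
        rw [hθ]
        nlinarith [mul_le_mul_of_nonneg_left hΔ (Real.sqrt_nonneg 2),
          mul_le_mul_of_nonneg_right hsqrt2 hγ]

lemma norm2_sub_feedback_le {t k : ℕ} {u : Fin N → ℝ} (hu : sparse t u) {T : Finset (Fin N)}
    (hT : T.card ≤ k) (e : Fin M → ℝ) {lam : ℝ} (hlam : 0 < lam) :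
    norm2 (u - lam⁻¹ • restrict T (Aᴴ *ᵥ (A *ᵥ u + e))) ≤
      (1 + lam⁻¹ * √(1 + ripConst A k) * √(1 + ripConst A t)) * norm2 u +
        lam⁻¹ * √(1 + ripConst A k) * norm2 e := by
  have hAu : norm2 (restrict T (Aᴴ *ᵥ (A *ᵥ u))) ≤
      √(1 + ripConst A k) * (√(1 + ripConst A t) * norm2 u) :=
    (norm2_restrict_conjTranspose_mulVec_le A hT _).trans
      (mul_le_mul_of_nonneg_left (norm2_mulVec_le_of_sparse A hu) (Real.sqrt_nonneg _))
  have he := norm2_restrict_conjTranspose_mulVec_le A hT e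
  have hsum := (norm2_add_le _ _).trans (add_le_add hAu he)
  rw [← restrict_add, ← mulVec_add] at hsum
  calc norm2 (u - lam⁻¹ • restrict T (Aᴴ *ᵥ (A *ᵥ u + e)))
      ≤ norm2 u + lam⁻¹ * norm2 (restrict T (Aᴴ *ᵥ (A *ᵥ u + e))) := by
        simpa only [norm2_smul, abs_of_pos (inv_pos.2 hlam)] using norm2_sub_le u
          (lam⁻¹ • restrict T (Aᴴ *ᵥ (A *ᵥ u + e)))
    _ ≤ _ := by
        have := mul_le_mul_of_nonneg_left hsum (inv_pos.2 hlam).le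
        linarith

lemma inv_mul_sqrt_one_add_le {δ lam : ℝ} (hδ0 : 0 ≤ δ) (hδ1 : δ < 1) (hlam : 0 < lam) :
    lam⁻¹ * √(1 + δ) ≤ (1 + δ) / (lam * √(1 - δ)) := by
  have hpos : 0 < √(1 - δ) := Real.sqrt_pos.2 (by linarith)
  have hprod : √(1 + δ) * √(1 - δ) ≤ 1 + δ := by
    rw [← Real.sqrt_mul (by linarith)]
    exact (Real.sqrt_le_one.2 (by nlinarith)).trans (by linarith)
  rw [inv_mul_eq_div, div_le_div_iff₀ hlam (mul_pos hlam hpos)]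
  nlinarith

end Iteration

theorem stmt9 {M N : ℕ} (A : Matrix (Fin M) (Fin N) ℝ) (hA : IsUnit (A * Aᴴ).det)
    (s k : ℕ) (hks : k ≥ s) (hδ : ripConst A k < 1)
    (x : Fin N → ℝ) (hx : sparse s x) (e : Fin M → ℝ) (y : Fin M → ℝ)
    (hy : y = A.mulVec x + e)
    (lam : ℝ) (hlam : 0 < lam)
    (μprev : Fin N → ℝ) (hμprev : sparse (k - 1) μprev)
    (xk : Fin N → ℝ)
    (hxk : xk = μprev + (Aᴴ * (A * Aᴴ)⁻¹).mulVec (y - A.mulVec μprev))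
    (Tk : Finset (Fin N)) (hTcard : Tk.card = k)
    (hTbig : ∀ i ∈ Tk, ∀ j ∉ Tk, |xk j| ≤ |xk i|)
    (μk : Fin N → ℝ)
    (hμk : μk = restrict Tk xk +
      lam⁻¹ • restrict Tk (Aᴴ.mulVec (y - A.mulVec (restrict Tk xk)))) :
    norm2 (x - μk) ≤
      2 * Real.sqrt 2 * pripConst A (2 * k + s - 1) *
        (1 + (1 + ripConst A k) * Real.sqrt (1 + ripConst A (s + k)) /
          (lam * Real.sqrt (1 - ripConst A k))) * norm2 (x - μprev) +
      ((1 + (1 + ripConst A k) * Real.sqrt (1 + ripConst A (s + k)) /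
          (lam * Real.sqrt (1 - ripConst A k))) *
        (Real.sqrt (2 + 2 * thetaConst A (k + s)) + Real.sqrt (1 + thetaConst A k)) +
        (1 + ripConst A k) / (lam * Real.sqrt (1 - ripConst A k))) * norm2 e := by
  set u := x - restrict Tk xk
  have hu := norm2_sub_hardThreshold_le A hA hks hx hμprev e (hy ▸ hxk) hTcard hTbig
  have husparse : sparse (s + k) u := sparse_sub hx (sparse_restrict hTcard.le xk)
  have hfeedback : x - μk = u - lam⁻¹ • restrict Tk (Aᴴ *ᵥ (A *ᵥ u + e)) := by
    have hresidual : y - A *ᵥ restrict Tk xk = A *ᵥ u + e := by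
      rw [hy, mulVec_sub]
      abel
    rw [hμk, hresidual, sub_add_eq_sub_sub]
  have hlamδ := inv_mul_sqrt_one_add_le (ripConst_nonneg A k) hδ hlam
  calc norm2 (x - μk)
      ≤ (1 + lam⁻¹ * √(1 + ripConst A k) * √(1 + ripConst A (s + k))) * norm2 u +
          lam⁻¹ * √(1 + ripConst A k) * norm2 e :=
        hfeedback ▸ norm2_sub_feedback_le A husparse hTcard.le e hlam
    _ ≤ (1 + (1 + ripConst A k) * √(1 + ripConst A (s + k)) / (lam * √(1 - ripConst A k))) *
          norm2 u + (1 + ripConst A k) / (lam * √(1 - ripConst A k)) * norm2 e := by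
        rw [mul_div_right_comm]
        gcongr
        exacts [norm2_nonneg u, norm2_nonneg e]
    _ ≤ _ := by
        have hC : 0 ≤ 1 + (1 + ripConst A k) * √(1 + ripConst A (s + k)) /
            (lam * √(1 - ripConst A k)) :=
          add_nonneg zero_le_one <| div_nonneg
            (mul_nonneg (by linarith [ripConst_nonneg A k]) (Real.sqrt_nonneg _)) (by positivity)
        nlinarith [mul_le_mul_of_nonneg_left hu hC]
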